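/- Let (I,J) be an instance of Variable-Sized Bin Covering with unit supply such that NFD's solution has k ≥ 2 well-covered bins and at least one of these well-covered bins is assigned at least three items by NFD. Then OPT(I,J) ≤ (9/4)·NFD(I,J). -/

import Mathlib

open scoped Classical

noncomputable section

namespace BinCov

/-- Profit of a solution `S` on the bin set `B`: a bin `i ∈ B` earns profit `p i`
if the total size of the items assigned to it is at least its demand `d i`. -/
def profit (d p s : ℕ → ℝ) (B : Finset ℕ) (S : ℕ → Finset ℕ) : ℝ :=
  ∑ i ∈ B, if d i ≤ ∑ j ∈ S i, s j then p i else 0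

/-- A solution assigns pairwise disjoint subsets of the item set `T` to the bins. -/
def IsSolution (T : Finset ℕ) (S : ℕ → Finset ℕ) : Prop :=
  (∀ i, S i ⊆ T) ∧ Pairwise fun i i' => Disjoint (S i) (S i')

/-- Optimal profit over all solutions on bins `B` and items `T`. -/
def OPT (d p s : ℕ → ℝ) (B T : Finset ℕ) : ℝ :=
  sSup (profit d p s B '' {S | IsSolution T S})

/-- Take a minimal prefix of `items` whose total size reaches `dem`;
returns this prefix together with the remaining items. -/
def takeFill (s : ℕ → ℝ) : ℝ → List ℕ → List ℕ × List ℕ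
  | _, [] => ([], [])
  | dem, j :: rest =>
    if dem ≤ s j then ([j], rest)
    else
      let q := takeFill s (dem - s j) rest
      (j :: q.1, q.2)

/-- Next Fit Decreasing on the list `bins` of bins and the list `items` of still
unassigned items (both by index, i.e. in non-increasing order of demand resp. size):
if the unassigned items cannot cover the current bin, it is left empty; otherwise a
minimal prefix of the unassigned items is assigned to it.  Returns, for each bin,
the set of items assigned to it. -/
def nfdAux (d s : ℕ → ℝ) : List ℕ → List ℕ → ℕ → Finset ℕ
  | [], _, _ => ∅
  | i :: bins, items, b =>
    if d i ≤ (items.map s).sum then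
      let q := takeFill s (d i) items
      if b = i then q.1.toFinset else nfdAux d s bins q.2 b
    else
      if b = i then ∅ else nfdAux d s bins items b

/-- The solution produced by NFD on bin set `B` and item set `T` (bins and items are
processed in increasing order of index; demands and sizes are non-increasing in the index). -/
def nfdSol (d s : ℕ → ℝ) (B T : Finset ℕ) : ℕ → Finset ℕ :=
  nfdAux d s (B.sort (· ≤ ·)) (T.sort (· ≤ ·))

/-- The total size `u i` that NFD assigns to bin `i`. -/
def nfdU (d s : ℕ → ℝ) (B T : Finset ℕ) (i : ℕ) : ℝ :=
  ∑ j ∈ nfdSol d s B T i, s j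

/-- The profit NFD earns (Variable-Sized Bin Covering: the profit of a bin is its demand). -/
def NFD (d s : ℕ → ℝ) (B T : Finset ℕ) : ℝ :=
  profit d d s B (nfdSol d s B T)

/-- A bin `istar` with `u istar > 0` in NFD's solution (bins `0,…,m-1`, items `T`) is
well-covered if for the smallest index `i' > istar` with `u i' = 0` (which must exist)
one has `u i ≤ 2 * d i` for all bins `i ≤ i'`. -/
def WellCovered (d s : ℕ → ℝ) (m : ℕ) (T : Finset ℕ) (istar : ℕ) : Prop :=
  istar < m ∧ 0 < nfdU d s (Finset.range m) T istar ∧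
    ∃ i', istar < i' ∧ i' < m ∧ nfdU d s (Finset.range m) T i' = 0 ∧
      (∀ i, istar < i → i < i' → nfdU d s (Finset.range m) T i ≠ 0) ∧
      ∀ i ≤ i', nfdU d s (Finset.range m) T i ≤ 2 * d i

/-- `istar` is the head of the instance: letting `i0` be the smallest index of a non-empty
bin of NFD's solution that is not well-covered, and `i1 ≥ i0` the smallest index with
`u (i1+1) = 0`, the head is the largest index `istar ≤ i1` with `u istar > 2 * d istar`. -/
def IsHead (d s : ℕ → ℝ) (m : ℕ) (T : Finset ℕ) (istar : ℕ) : Prop :=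
  ∃ i0 i1,
    i0 < m ∧ 0 < nfdU d s (Finset.range m) T i0 ∧ ¬ WellCovered d s m T i0 ∧
    (∀ i < i0, 0 < nfdU d s (Finset.range m) T i → WellCovered d s m T i) ∧
    i0 ≤ i1 ∧ nfdU d s (Finset.range m) T (i1 + 1) = 0 ∧
    (∀ i, i0 ≤ i → i < i1 → nfdU d s (Finset.range m) T (i + 1) ≠ 0) ∧
    istar ≤ i1 ∧ 2 * d istar < nfdU d s (Finset.range m) T istar ∧
    (∀ i ≤ i1, 2 * d i < nfdU d s (Finset.range m) T i → i ≤ istar)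

/-- The inner loop of `ALG*` on one bin: `dcap` is the bin's demand (items are admissible iff
their size is at most `dcap`), `space` is the part of the demand not yet covered, and `rem j`
is the still unassigned part of item `j` (items `0,…,n-1`, sizes non-increasing in the index).
While the bin is not covered and some admissible item is not fully assigned, the largest such
item (i.e. the one of smallest index) is taken and its remaining part is assigned to the bin,
splitting it so that the bin is exactly covered if it would overflow.
Returns the updated remainders together with the total amount assigned to the bin. -/
def fillBin (s : ℕ → ℝ) (n : ℕ) (dcap : ℝ) : ℕ → ℝ → (ℕ → ℝ) → (ℕ → ℝ) × ℝ
  | 0, _, rem => (rem, 0)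
  | fuel + 1, space, rem =>
    if h : ∃ j, j < n ∧ s j ≤ dcap ∧ 0 < rem j then
      let j := Nat.find h
      if rem j ≤ space then
        let q := fillBin s n dcap fuel (space - rem j) (Function.update rem j 0)
        (q.1, q.2 + rem j)
      else
        (Function.update rem j (rem j - space), space)
    else (rem, 0)

/-- The outer loop of `ALG*`: the bins are processed in the given order (non-increasing
efficiency); returns the total amount assigned to each bin. -/
def algStarFillAux (d s : ℕ → ℝ) (n : ℕ) : List ℕ → (ℕ → ℝ) → ℕ → ℝ
  | [], _, _ => 0
  | i :: bins, rem, b =>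
    let q := fillBin s n (d i) n (d i) rem
    if b = i then q.2 else algStarFillAux d s n bins q.1 b

/-- The total amount `ALG*` assigns to each bin, on the instance with bins `0,…,m-1`
(in non-increasing order of efficiency) and items `0,…,n-1` (in non-increasing order of size). -/
def algStarFill (m n : ℕ) (d s : ℕ → ℝ) : ℕ → ℝ :=
  algStarFillAux d s n (List.range m) fun j => if j < n then s j else 0

/-- The modified profit `p*` of the solution produced by `ALG*`. -/
def algStarPStar (m n : ℕ) (d p s : ℕ → ℝ) : ℝ :=
  ∑ i ∈ Finset.range m, p i * min (algStarFill m n d s i / d i) 1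

/-- The optimum of the linear program for the modified Bin Covering problem. -/
def LPOpt (m n : ℕ) (d p s : ℕ → ℝ) : ℝ :=
  sSup {v : ℝ | ∃ y : ℕ → ℝ, ∃ x : ℕ → ℕ → ℝ,
    (∀ i < m, y i ≤ (∑ j ∈ Finset.range n, x j i) / d i) ∧
    (∀ j < n, ∑ i ∈ Finset.range m, x j i ≤ s j) ∧
    (∀ i, 0 ≤ y i ∧ y i ≤ 1) ∧
    (∀ j i, 0 ≤ x j i) ∧
    (∀ j < n, ∀ i < m, d i < s j → x j i = 0) ∧
    v = ∑ i ∈ Finset.range m, p i * y i}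

/-- A solution of the modified Bin Covering problem, assigning item parts from the
finite set `P` (part `q ∈ P` belongs to item `itm q`) to the bins `0,…,m-1`;
a part may only be assigned to a bin to which its item is admissible. -/
def IsPartSolution (m : ℕ) (d s : ℕ → ℝ) (itm : ℕ → ℕ) (P : Finset ℕ) (S : ℕ → Finset ℕ) : Prop :=
  (∀ i, S i ⊆ P) ∧ (Pairwise fun i i' => Disjoint (S i) (S i')) ∧
  (∀ i < m, ∀ q ∈ S i, s (itm q) ≤ d i) ∧ (∀ i, m ≤ i → S i = ∅)

/-- The modified profit `p*` of a solution, where `psz q` is the size of part `q`. -/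
def pStarParts (m : ℕ) (d p psz : ℕ → ℝ) (S : ℕ → Finset ℕ) : ℝ :=
  ∑ i ∈ Finset.range m, p i * min ((∑ q ∈ S i, psz q) / d i) 1

/-- A solution of the modified Bin Covering problem is maximal if there are no two distinct
bins `i`, `i'` with `0 < s(S_i) < d_i`, `0 < s(S_i') < d_i'` and `e_i ≤ e_i'` such that
some item of `S_i` is admissible to bin `i'`. -/
def MaximalMod (m : ℕ) (d p s : ℕ → ℝ) (S : ℕ → Finset ℕ) : Prop :=
  ¬ ∃ i i', i < m ∧ i' < m ∧ i ≠ i' ∧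
      (0 < ∑ j ∈ S i, s j) ∧ (∑ j ∈ S i, s j) < d i ∧
      (0 < ∑ j ∈ S i', s j) ∧ (∑ j ∈ S i', s j) < d i' ∧
      p i / d i ≤ p i' / d i' ∧ ∃ j ∈ S i, s j ≤ d i'

/-- A solution induced by a matching in the bipartite graph on bins and items with an
edge `ij` whenever `s j > d i`: every bin receives at most one item, and any item
assigned to a bin covers it singularly. -/
def IsMatchingSol (m n : ℕ) (d s : ℕ → ℝ) (S : ℕ → Finset ℕ) : Prop :=
  IsSolution (Finset.range n) S ∧ (∀ i, (S i).card ≤ 1) ∧ ∀ i < m, ∀ j ∈ S i, d i < s j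

end BinCov

namespace BinCov

variable (d s : ℕ → ℝ)

lemma takeFill_append : ∀ (dem : ℝ) (l : List ℕ),
    (takeFill s dem l).1 ++ (takeFill s dem l).2 = l := by
  intro dem l
  induction l generalizing dem with
  | nil => simp [takeFill]
  | cons j rest ih =>
    by_cases h : dem ≤ s j
    · simp [takeFill, h]
    · simp only [takeFill, if_neg h]
      simpa using ih (dem - s j)

lemma takeFill_sum : ∀ (dem : ℝ) (l : List ℕ), dem ≤ (l.map s).sum →
    dem ≤ (((takeFill s dem l).1).map s).sum := by
  intro dem l
  induction l generalizing dem with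
  | nil => simp [takeFill]
  | cons j rest ih =>
    intro h
    by_cases hj : dem ≤ s j
    · simpa [takeFill, hj] using hj
    · simp only [takeFill, if_neg hj, List.map_cons, List.sum_cons]
      have h' : dem - s j ≤ (rest.map s).sum := by
        simp only [List.map_cons, List.sum_cons] at h; linarith
      have := ih (dem - s j) h'
      linarith

lemma takeFill_last : ∀ (dem : ℝ) (l : List ℕ), 0 < dem →
    (takeFill s dem l).1 = [] ∨
      ∃ x jl, (takeFill s dem l).1 = x ++ [jl] ∧ ((x.map s).sum < dem) := by
  intro dem l
  induction l generalizing dem with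
  | nil => intro _; left; simp [takeFill]
  | cons j rest ih =>
    intro hdem
    by_cases hj : dem ≤ s j
    · right; exact ⟨[], j, by simp [takeFill, hj], by simpa using hdem⟩
    · push_neg at hj
      have hpos : 0 < dem - s j := by linarith
      rcases ih (dem - s j) hpos with h0 | ⟨x, jl, hx, hsum⟩
      · right
        refine ⟨[], j, ?_, by simpa using hdem⟩
        simp [takeFill, not_le.mpr hj, h0]
      · right
        refine ⟨j :: x, jl, ?_, ?_⟩
        · simp [takeFill, not_le.mpr hj, hx]
        · simp only [List.map_cons, List.sum_cons]; linarith

def nfdRem (d s : ℕ → ℝ) : List ℕ → List ℕ → List ℕ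
  | [], items => items
  | i :: bins, items =>
    if d i ≤ (items.map s).sum then nfdRem d s bins (takeFill s (d i) items).2
    else nfdRem d s bins items

lemma takeFill_snd_suffix (dem : ℝ) (l : List ℕ) : (takeFill s dem l).2 <:+ l :=
  ⟨(takeFill s dem l).1, takeFill_append s dem l⟩

lemma nfdRem_suffix : ∀ (bins items : List ℕ), nfdRem d s bins items <:+ items := by
  intro bins
  induction bins with
  | nil => intro items; simp [nfdRem]
  | cons i bins ih =>
    intro items
    by_cases h : d i ≤ (items.map s).sum
    · simp only [nfdRem, if_pos h]
      exact (ih _).trans (takeFill_snd_suffix s _ _)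
    · simpa [nfdRem, if_neg h] using ih items

lemma nfdAux_append : ∀ (L₁ L₂ items : List ℕ) (b : ℕ),
    nfdAux d s (L₁ ++ L₂) items b =
      if b ∈ L₁ then nfdAux d s L₁ items b
      else nfdAux d s L₂ (nfdRem d s L₁ items) b := by
  intro L₁
  induction L₁ with
  | nil => intro L₂ items b; simp [nfdRem]
  | cons i L₁ ih =>
    intro L₂ items b
    by_cases hcov : d i ≤ (items.map s).sum
    · by_cases hb : b = i
      · simp [nfdAux, nfdRem, hcov, hb]
      · simp only [List.cons_append, nfdAux, if_pos hcov, if_neg hb, nfdRem]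
        rw [ih]
        simp [List.mem_cons, hb]
    · by_cases hb : b = i
      · simp [nfdAux, nfdRem, hcov, hb]
      · simp only [List.cons_append, nfdAux, if_neg hcov, if_neg hb, nfdRem]
        rw [ih]
        simp [List.mem_cons, hb]

lemma takeFill_fst_nodup (dem : ℝ) (l : List ℕ) (h : l.Nodup) :
    (takeFill s dem l).1.Nodup := by
  have := takeFill_append s dem l
  rw [← this] at h
  exact h.of_append_left

lemma takeFill_snd_nodup (dem : ℝ) (l : List ℕ) (h : l.Nodup) :
    (takeFill s dem l).2.Nodup := by
  have := takeFill_append s dem l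
  rw [← this] at h
  exact h.of_append_right

lemma nfdAux_conserve : ∀ (bins items : List ℕ), bins.Nodup → items.Nodup →
    (items.map s).sum =
      (bins.map fun b => ∑ j ∈ nfdAux d s bins items b, s j).sum
        + ((nfdRem d s bins items).map s).sum := by
  intro bins
  induction bins with
  | nil => intro items _ _; simp [nfdAux, nfdRem]
  | cons i bins ih =>
    intro items hb hi
    have hbn : bins.Nodup := hb.of_cons
    have hnotmem : i ∉ bins := by simp [List.nodup_cons] at hb; exact hb.1
    by_cases hcov : d i ≤ (items.map s).sum
    · set q := takeFill s (d i) items with hq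
      have happ : q.1 ++ q.2 = items := takeFill_append s (d i) items
      have hsplit : (items.map s).sum = ((q.1).map s).sum + ((q.2).map s).sum := by
        rw [← happ]; simp
      have h1n : q.1.Nodup := takeFill_fst_nodup s _ _ hi
      have h2n : q.2.Nodup := takeFill_snd_nodup s _ _ hi
      have hhead : nfdAux d s (i :: bins) items i = q.1.toFinset := by
        simp [nfdAux, hcov, hq]
      have htail : ∀ b ∈ bins, nfdAux d s (i :: bins) items b = nfdAux d s bins q.2 b := by
        intro b hbm
        have : b ≠ i := fun h => hnotmem (h ▸ hbm)
        simp [nfdAux, hcov, this, hq]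
      have hmap : List.map (fun b => ∑ j ∈ nfdAux d s (i :: bins) items b, s j) bins
          = List.map (fun b => ∑ j ∈ nfdAux d s bins q.2 b, s j) bins :=
        List.map_congr_left fun b hbm => by rw [htail b hbm]
      rw [List.map_cons, List.sum_cons, hhead, List.sum_toFinset _ h1n, hmap]
      have := ih q.2 hbn h2n
      simp only [nfdRem, if_pos hcov]
      rw [hsplit, this]
      ring
    · have htail : ∀ b ∈ bins, nfdAux d s (i :: bins) items b = nfdAux d s bins items b := by
        intro b hbm
        have : b ≠ i := fun h => hnotmem (h ▸ hbm)
        simp [nfdAux, hcov, this]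
      have hhead : nfdAux d s (i :: bins) items i = ∅ := by simp [nfdAux, hcov]
      have hmap : List.map (fun b => ∑ j ∈ nfdAux d s (i :: bins) items b, s j) bins
          = List.map (fun b => ∑ j ∈ nfdAux d s bins items b, s j) bins :=
        List.map_congr_left fun b hbm => by rw [htail b hbm]
      rw [List.map_cons, List.sum_cons, hhead, hmap]
      have := ih items hbn hi
      simp only [nfdRem, if_neg hcov]
      rw [this]
      simp

lemma nfdAux_cases : ∀ (bins items : List ℕ) (b : ℕ),
    nfdAux d s bins items b = ∅ ∨
      ∃ its', its' <:+ items ∧ d b ≤ ((its'.map s).sum) ∧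
        nfdAux d s bins items b = (takeFill s (d b) its').1.toFinset := by
  intro bins
  induction bins with
  | nil => intro items b; left; simp [nfdAux]
  | cons i bins ih =>
    intro items b
    by_cases hcov : d i ≤ (items.map s).sum
    · by_cases hb : b = i
      · right
        exact ⟨items, List.suffix_refl _, by rw [hb]; exact hcov, by simp [nfdAux, hcov, hb]⟩
      · have : nfdAux d s (i :: bins) items b = nfdAux d s bins (takeFill s (d i) items).2 b := by
          simp [nfdAux, hcov, hb]
        rw [this]
        rcases ih (takeFill s (d i) items).2 b with h | ⟨its', hsuf, hle, heq⟩
        · left; exact h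
        · right; exact ⟨its', hsuf.trans (takeFill_snd_suffix s _ _), hle, heq⟩
    · by_cases hb : b = i
      · left; simp [nfdAux, hcov, hb]
      · have : nfdAux d s (i :: bins) items b = nfdAux d s bins items b := by
          simp [nfdAux, hcov, hb]
        rw [this]
        exact ih items b

lemma sum_range_list (f : ℕ → ℝ) : ∀ k, ((List.range k).map f).sum = ∑ i ∈ Finset.range k, f i := by
  intro k
  induction k with
  | zero => simp
  | succ k ih => rw [List.range_succ, Finset.sum_range_succ]; simp [ih]

lemma nfdSol_eq (m n : ℕ) :
    nfdSol d s (Finset.range m) (Finset.range n) = nfdAux d s (List.range m) (List.range n) := by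
  unfold nfdSol
  rw [Finset.sort_range, Finset.sort_range]

lemma nfd_covered (m n : ℕ) (b : ℕ)
    (h : 0 < nfdU d s (Finset.range m) (Finset.range n) b) :
    d b ≤ nfdU d s (Finset.range m) (Finset.range n) b := by
  unfold nfdU at *
  rw [nfdSol_eq] at *
  rcases nfdAux_cases d s (List.range m) (List.range n) b with he | ⟨its', hsuf, hle, heq⟩
  · rw [he] at h; simp at h
  · rw [heq]
    have hnd : its'.Nodup := hsuf.sublist.nodup List.nodup_range
    have h1n := takeFill_fst_nodup s (d b) its' hnd
    rw [List.sum_toFinset _ h1n]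
    exact takeFill_sum s (d b) its' hle

lemma nfd_three (m n : ℕ) (b : ℕ) (hbm : b < m)
    (hd : ∀ i < m, 0 < d i) (hs : ∀ j < n, 0 < s j) (hsm : ∀ j j', j ≤ j' → j' < n → s j' ≤ s j)
    (hcard : 3 ≤ (nfdSol d s (Finset.range m) (Finset.range n) b).card) :
    nfdU d s (Finset.range m) (Finset.range n) b ≤ 3 / 2 * d b := by
  have hdb : 0 < d b := hd b hbm
  unfold nfdU
  rw [nfdSol_eq] at *
  rcases nfdAux_cases d s (List.range m) (List.range n) b with he | ⟨its', hsuf, hle, heq⟩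
  · rw [he] at hcard; simp at hcard
  · rw [heq] at hcard ⊢
    set a := (takeFill s (d b) its').1 with ha
    have hnd : its'.Nodup := hsuf.sublist.nodup List.nodup_range
    have h1n : a.Nodup := takeFill_fst_nodup s (d b) its' hnd
    have hsubl : a.Sublist (List.range n) :=
      ((takeFill_append s (d b) its' ▸ List.sublist_append_left a (takeFill s (d b) its').2).trans
        hsuf.sublist)
    have hmemn : ∀ j ∈ a, j < n := by
      intro j hj
      have := hsubl.mem hj
      simpa using this
    have hpw : a.Pairwise (· < ·) := List.pairwise_lt_range.sublist hsubl
    rw [List.sum_toFinset _ h1n]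
    have hlen : 3 ≤ a.length := by
      rw [← List.toFinset_card_of_nodup h1n]; exact hcard
    rcases takeFill_last s (d b) its' hdb with h0 | ⟨x, jl, hx, hsum⟩
    · rw [← ha] at h0; rw [h0] at hlen; simp at hlen
    · rw [← ha] at hx
      have hxlen : 2 ≤ x.length := by
        have := hlen; rw [hx] at this; simp at this; omega
      match x, hxlen with
      | x0 :: x1 :: xs, _ =>
        have hjln : jl < n := hmemn jl (by simp [hx])
        have hlt : ∀ j ∈ x0 :: x1 :: xs, j < jl := by
          intro j hj
          rw [hx] at hpw
          exact (List.pairwise_append.mp hpw).2.2 j hj jl (by simp)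
        have hge : ∀ j ∈ x0 :: x1 :: xs, s jl ≤ s j := by
          intro j hj
          exact hsm j jl (le_of_lt (hlt j hj)) hjln
        have hpos : ∀ j ∈ x0 :: x1 :: xs, 0 < s j := by
          intro j hj
          exact hs j (hmemn j (by rw [hx]; exact List.mem_append_left _ hj))
        have hxs_nonneg : 0 ≤ (xs.map s).sum := by
          apply List.sum_nonneg
          intro r hr
          rcases List.mem_map.mp hr with ⟨j, hj, rfl⟩
          exact le_of_lt (hpos j (by simp [hj]))
        have hxsum_ge : 2 * s jl ≤ ((x0 :: x1 :: xs).map s).sum := by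
          simp only [List.map_cons, List.sum_cons]
          have h0 := hge x0 (by simp)
          have h1 := hge x1 (by simp)
          linarith
        have hasum : (a.map s).sum = ((x0 :: x1 :: xs).map s).sum + s jl := by
          rw [hx]; simp; ring
        rw [hasum]
        have hstrict : ((x0 :: x1 :: xs).map s).sum < d b := hsum
        nlinarith

lemma nfd_region (m n I' : ℕ) (hI : I' < m) (hdI : 0 < d I')
    (hu0 : nfdU d s (Finset.range m) (Finset.range n) I' = 0) :
    ∑ j ∈ Finset.range n, s j ≤
      (∑ b ∈ Finset.range I', nfdU d s (Finset.range m) (Finset.range n) b) + d I' := by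
  have hsplitL : List.range m = List.range I' ++ (List.range (m - I')).map (I' + ·) := by
    have h : List.range (I' + (m - I')) = _ := List.range_add
    rwa [Nat.add_sub_cancel' hI.le] at h
  set remAt := nfdRem d s (List.range I') (List.range n) with hrem
  have hremnd : remAt.Nodup := (nfdRem_suffix d s _ _).sublist.nodup List.nodup_range
  have hb_pref : ∀ b ∈ List.range I',
      nfdAux d s (List.range m) (List.range n) b = nfdAux d s (List.range I') (List.range n) b := by
    intro b hb
    rw [hsplitL, nfdAux_append, if_pos hb]
  have hcons := nfdAux_conserve d s (List.range I') (List.range n)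
    List.nodup_range List.nodup_range
  -- rem sum < d I'
  have hI'notmem : I' ∉ List.range I' := by simp
  have hSolI' : nfdAux d s (List.range m) (List.range n) I'
      = nfdAux d s ((List.range (m - I')).map (I' + ·)) remAt I' := by
    rw [hsplitL, nfdAux_append, if_neg hI'notmem]
  have hmI : m - I' = (m - I' - 1) + 1 := by omega
  have hheadlist : (List.range (m - I')).map (I' + ·)
      = I' :: ((List.range (m - I' - 1)).map Nat.succ).map (I' + ·) := by
    rw [hmI, List.range_succ_eq_map]
    simp
  have hremlt : (remAt.map s).sum < d I' := by
    by_contra hc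
    push_neg at hc
    have : nfdAux d s (List.range m) (List.range n) I'
        = (takeFill s (d I') remAt).1.toFinset := by
      rw [hSolI', hheadlist]
      simp [nfdAux, hc]
    have hu : nfdU d s (Finset.range m) (Finset.range n) I'
        = (((takeFill s (d I') remAt).1).map s).sum := by
      unfold nfdU
      rw [nfdSol_eq, this, List.sum_toFinset _ (takeFill_fst_nodup s _ _ hremnd)]
    have := takeFill_sum s (d I') remAt hc
    rw [hu] at hu0
    linarith
  -- conservation in Finset form
  have hmapeq : (List.range I').map (fun b => ∑ j ∈ nfdAux d s (List.range I') (List.range n) b, s j)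
      = (List.range I').map (fun b => nfdU d s (Finset.range m) (Finset.range n) b) := by
    apply List.map_congr_left
    intro b hb
    unfold nfdU
    rw [nfdSol_eq, hb_pref b hb]
  rw [hmapeq, sum_range_list, sum_range_list] at hcons
  rw [← hrem] at hcons
  linarith

lemma profit_le_total (p : ℕ → ℝ) (m n : ℕ) (hs : ∀ j < n, 0 ≤ s j) (S : ℕ → Finset ℕ)
    (hS : IsSolution (Finset.range n) S) :
    profit d d s (Finset.range m) S ≤ ∑ j ∈ Finset.range n, s j := by
  obtain ⟨hsub, hdisj⟩ := hS
  have hnn : ∀ j ∈ Finset.range n, 0 ≤ s j := fun j hj => hs j (Finset.mem_range.mp hj)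
  have h1 : profit d d s (Finset.range m) S ≤ ∑ i ∈ Finset.range m, ∑ j ∈ S i, s j := by
    apply Finset.sum_le_sum
    intro i _
    by_cases h : d i ≤ ∑ j ∈ S i, s j
    · simpa [h] using h
    · simp only [if_neg h]
      exact Finset.sum_nonneg fun j hj => hnn j (hsub i hj)
  have hpd : (↑(Finset.range m) : Set ℕ).PairwiseDisjoint S := fun i _ j _ hij => hdisj hij
  have h2 : ∑ i ∈ Finset.range m, ∑ j ∈ S i, s j
      = ∑ j ∈ (Finset.range m).biUnion S, s j := (Finset.sum_biUnion hpd).symm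
  have h3 : (Finset.range m).biUnion S ⊆ Finset.range n := by
    intro j hj
    rcases Finset.mem_biUnion.mp hj with ⟨i, _, hji⟩
    exact hsub i hji
  calc profit d d s (Finset.range m) S ≤ _ := h1
    _ = _ := h2
    _ ≤ ∑ j ∈ Finset.range n, s j :=
      Finset.sum_le_sum_of_subset_of_nonneg h3 fun j hj _ => hnn j hj

lemma nfd_subset (m n b : ℕ) :
    nfdSol d s (Finset.range m) (Finset.range n) b ⊆ Finset.range n := by
  rw [nfdSol_eq]
  rcases nfdAux_cases d s (List.range m) (List.range n) b with he | ⟨its', hsuf, _, heq⟩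
  · rw [he]; exact Finset.empty_subset _
  · rw [heq]
    intro j hj
    have : j ∈ (takeFill s (d b) its').1 := List.mem_toFinset.mp hj
    have h2 : j ∈ its' := by
      rw [← takeFill_append s (d b) its']
      exact List.mem_append_left _ this
    have := hsuf.sublist.mem h2
    simpa using this

lemma nfd_nonneg (m n : ℕ) (hs : ∀ j < n, 0 ≤ s j) (b : ℕ) :
    0 ≤ nfdU d s (Finset.range m) (Finset.range n) b := by
  unfold nfdU
  apply Finset.sum_nonneg
  intro j hj
  exact hs j (Finset.mem_range.mp (nfd_subset d s m n b hj))

/- STATEMENT 15 -/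
theorem stmt15 (m n : ℕ) (d s : ℕ → ℝ)
    (hd : ∀ i < m, 0 < d i) (hdm : ∀ i i', i ≤ i' → i' < m → d i' ≤ d i)
    (hs : ∀ j < n, 0 < s j) (hsm : ∀ j j', j ≤ j' → j' < n → s j' ≤ s j)
    (hk : 2 ≤ ((Finset.range m).filter (WellCovered d s m (Finset.range n))).card)
    (hthree : ∃ i, WellCovered d s m (Finset.range n) i ∧
      3 ≤ (nfdSol d s (Finset.range m) (Finset.range n) i).card) :
    OPT d d s (Finset.range m) (Finset.range n) ≤
      9 / 4 * NFD d s (Finset.range m) (Finset.range n) := by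
  obtain ⟨i₃, hw3, hcard3⟩ := hthree
  obtain ⟨w₂, hw2, hw2ne⟩ : ∃ w₂, WellCovered d s m (Finset.range n) w₂ ∧ w₂ ≠ i₃ := by
    obtain ⟨a, ha, b, hb, hab⟩ := Finset.one_lt_card.mp (by omega : 1 < ((Finset.range m).filter (WellCovered d s m (Finset.range n))).card)
    have haw : WellCovered d s m (Finset.range n) a := (Finset.mem_filter.mp ha).2
    have hbw : WellCovered d s m (Finset.range n) b := (Finset.mem_filter.mp hb).2
    by_cases h : a = i₃
    · exact ⟨b, hbw, fun hc => hab (by rw [h, hc])⟩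
    · exact ⟨a, haw, h⟩
  obtain ⟨hi3m, hu3pos, i'₁, hlt1, hi'1m, hz1, _, hbd1⟩ := hw3
  obtain ⟨hw2m, hu2pos, i'₂, hlt2, hi'2m, hz2, _, hbd2⟩ := hw2
  set u := nfdU d s (Finset.range m) (Finset.range n) with hu
  set I' := max i'₁ i'₂ with hI'
  have hI'm : I' < m := max_lt hi'1m hi'2m
  have hzI : u I' = 0 := by
    rcases max_choice i'₁ i'₂ with h | h <;> rw [hI', h] <;> assumption
  have hbdI : ∀ i ≤ I', u i ≤ 2 * d i := by
    rcases max_choice i'₁ i'₂ with h | h <;> rw [hI', h]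
    · exact hbd1
    · exact hbd2
  have hi3I : i₃ < I' := lt_of_lt_of_le hlt1 (le_max_left _ _)
  have hw2I : w₂ < I' := lt_of_lt_of_le hlt2 (le_max_right _ _)
  have hsnn : ∀ j < n, 0 ≤ s j := fun j hj => (hs j hj).le
  have hcov : ∀ b, 0 < u b → d b ≤ u b := fun b hb => nfd_covered d s m n b hb
  have hthreeb : u i₃ ≤ 3 / 2 * d i₃ := nfd_three d s m n i₃ hi3m hd hs hsm hcard3
  have hregion : ∑ j ∈ Finset.range n, s j ≤ (∑ b ∈ Finset.range I', u b) + d I' :=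
    nfd_region d s m n I' hI'm (hd I' hI'm) hzI
  set N' := ∑ i ∈ Finset.range I', (if d i ≤ u i then d i else 0) with hN'
  have hcov3 : d i₃ ≤ u i₃ := hcov i₃ hu3pos
  have hcovw2 : d w₂ ≤ u w₂ := hcov w₂ hu2pos
  have hi3mem : i₃ ∈ Finset.range I' := Finset.mem_range.mpr hi3I
  -- Step 1 : sum of u over the region
  have hstep1 : ∑ i ∈ Finset.range I', u i ≤ 2 * N' - 1 / 2 * d i₃ := by
    rw [hN', ← Finset.add_sum_erase _ u hi3mem, ← Finset.add_sum_erase _ _ hi3mem]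
    have hrest : ∑ i ∈ (Finset.range I').erase i₃, u i
        ≤ ∑ i ∈ (Finset.range I').erase i₃, 2 * (if d i ≤ u i then d i else 0) := by
      apply Finset.sum_le_sum
      intro i hi
      have hiI : i < I' := Finset.mem_range.mp (Finset.mem_of_mem_erase hi)
      have hun : 0 ≤ u i := nfd_nonneg d s m n hsnn i
      rcases eq_or_lt_of_le hun with h0 | hpos
      · rw [← h0]
        have hdi : 0 < d i := hd i (lt_trans hiI hI'm)
        rw [if_neg (by linarith : ¬ d i ≤ (0:ℝ))]
        simp
      · rw [if_pos (hcov i hpos)]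
        linarith [hbdI i hiI.le]
    rw [if_pos hcov3]
    rw [← Finset.mul_sum] at hrest
    linarith
  -- Step 2 : N' ≤ NFD
  have hNFD : NFD d s (Finset.range m) (Finset.range n) = ∑ i ∈ Finset.range m, (if d i ≤ u i then d i else 0) := rfl
  have hstep2 : N' ≤ NFD d s (Finset.range m) (Finset.range n) := by
    rw [hNFD, hN']
    apply Finset.sum_le_sum_of_subset_of_nonneg
    · exact Finset.range_subset_range.mpr hI'm.le
    · intro i hi _
      by_cases h : d i ≤ u i <;> simp [h]
      exact (hd i (Finset.mem_range.mp hi)).le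
  -- Step 3 : d i₃ + d w₂ ≤ N'
  have hstep3 : d i₃ + d w₂ ≤ N' := by
    have hpair : ({i₃, w₂} : Finset ℕ) ⊆ Finset.range I' := by
      intro x hx
      rcases Finset.mem_insert.mp hx with h | h
      · rw [h]; exact hi3mem
      · rw [Finset.mem_singleton.mp h]; exact Finset.mem_range.mpr hw2I
    have hps : ∑ i ∈ ({i₃, w₂} : Finset ℕ), (if d i ≤ u i then d i else 0) = d i₃ + d w₂ := by
      rw [Finset.sum_pair (fun h => hw2ne h.symm)]
      rw [if_pos hcov3, if_pos hcovw2]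
    rw [hN', ← hps]
    apply Finset.sum_le_sum_of_subset_of_nonneg hpair
    intro i hi _
    by_cases h : d i ≤ u i <;> simp [h]
    exact (hd i (lt_trans (Finset.mem_range.mp hi) hI'm)).le
  -- Step 4 : monotonicity
  have hmon3 : d I' ≤ d i₃ := hdm i₃ I' hi3I.le hI'm
  have hmonw : d I' ≤ d w₂ := hdm w₂ I' hw2I.le hI'm
  -- final chain
  have hT : ∑ j ∈ Finset.range n, s j ≤ 9 / 4 * NFD d s (Finset.range m) (Finset.range n) := by
    have : d I' ≤ 3 / 4 * d i₃ + 1 / 4 * d w₂ := by linarith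
    linarith
  have hNFDnn : 0 ≤ NFD d s (Finset.range m) (Finset.range n) := by
    rw [hNFD]
    apply Finset.sum_nonneg
    intro i hi
    by_cases h : d i ≤ u i <;> simp [h]
    exact (hd i (Finset.mem_range.mp hi)).le
  apply Real.sSup_le
  · rintro x ⟨S, hS, rfl⟩
    exact le_trans (profit_le_total d s d m n hsnn S hS) hT
  · linarith


end BinCov
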